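/- Assume k is algebraically closed. For each w ∈ W, the set 𝒢-max_w R coincides with the set of maximal members (under inclusion) of 𝒢-spec_w R. -/

import Mathlib

open MvPolynomial

/-- The action of `h ∈ (kˣ)ⁿ` on `k[y₁,…,yₙ]` by `yᵢ ↦ hᵢ yᵢ`. -/
noncomputable def tact {k : Type*} [CommSemiring k] {n : ℕ} (h : Fin n → kˣ) :
    MvPolynomial (Fin n) k →ₐ[k] MvPolynomial (Fin n) k :=
  aeval fun i => (h i : k) • X i

/-- `(I : G) = ⋂_{g ∈ G} g(I)` for a subgroup `G` of the torus `(kˣ)ⁿ`. -/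
noncomputable def resT {k : Type*} [CommSemiring k] {n : ℕ} (G : Subgroup (Fin n → kˣ))
    (I : Ideal (MvPolynomial (Fin n) k)) : Ideal (MvPolynomial (Fin n) k) :=
  ⨅ g ∈ G, Ideal.comap (tact g) I

/-- `spec_w R`: primes `P` with `P ∩ {y₁,…,yₙ} = {yᵢ : i ∈ w}`. -/
def specW (k : Type*) [CommSemiring k] {n : ℕ} (w : Set (Fin n)) :
    Set (Ideal (MvPolynomial (Fin n) k)) :=
  {P | P.IsPrime ∧ ∀ i, X i ∈ P ↔ i ∈ w}

/-- `max_w R = max R ∩ spec_w R`. -/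
def maxW (k : Type*) [CommSemiring k] {n : ℕ} (w : Set (Fin n)) :
    Set (Ideal (MvPolynomial (Fin n) k)) :=
  {M | M.IsMaximal ∧ ∀ i, X i ∈ M ↔ i ∈ w}

/-- `𝒢-spec_w R = {(P : G_w) : P ∈ spec_w R}`. -/
def GspecW {k : Type*} [CommSemiring k] {n : ℕ}
    (G : Set (Fin n) → Subgroup (Fin n → kˣ)) (w : Set (Fin n)) :
    Set (Ideal (MvPolynomial (Fin n) k)) :=
  {Q | ∃ P ∈ specW k w, Q = resT (G w) P}

/-- `𝒢-spec R`, the set of `𝒢`-prime ideals. -/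
def GspecAll {k : Type*} [CommSemiring k] {n : ℕ}
    (G : Set (Fin n) → Subgroup (Fin n → kˣ)) :
    Set (Ideal (MvPolynomial (Fin n) k)) :=
  ⋃ w, GspecW G w

/-- `𝒢`-semiprime ideals: intersections of collections of `𝒢`-prime ideals. -/
def GSemiprime {k : Type*} [CommSemiring k] {n : ℕ}
    (G : Set (Fin n) → Subgroup (Fin n → kˣ))
    (J : Ideal (MvPolynomial (Fin n) k)) : Prop :=
  ∃ T ⊆ GspecAll G, J = sInf T

/-- `𝒢-max_w R = {(M : G_w) : M ∈ max_w R}`. -/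
def GmaxW {k : Type*} [CommSemiring k] {n : ℕ}
    (G : Set (Fin n) → Subgroup (Fin n → kˣ)) (w : Set (Fin n)) :
    Set (Ideal (MvPolynomial (Fin n) k)) :=
  {Q | ∃ M ∈ maxW k w, Q = resT (G w) M}

/-- `𝒢-max R`. -/
def GmaxAll {k : Type*} [CommSemiring k] {n : ℕ}
    (G : Set (Fin n) → Subgroup (Fin n → kˣ)) :
    Set (Ideal (MvPolynomial (Fin n) k)) :=
  ⋃ w, GmaxW G w

/-- `P ↦ (P : 𝒢)`, i.e. `(P : G_w)` where `w = {i : yᵢ ∈ P}`. -/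
noncomputable def Gquot {k : Type*} [CommSemiring k] {n : ℕ}
    (G : Set (Fin n) → Subgroup (Fin n → kˣ))
    (P : Ideal (MvPolynomial (Fin n) k)) : Ideal (MvPolynomial (Fin n) k) :=
  resT (G {i | X i ∈ P}) P

/-!
By the Nullstellensatz, a member of `max_w R` is the vanishing ideal `𝔪_a` of a point `a` whose
zero coordinates are exactly those indexed by `w`, and any two such points differ by an element
`t` of the torus. As the torus is commutative, `(𝔪_{t a} : G)` is the preimage of `(𝔪_a : G)`
under the automorphism `t`, so an inclusion between the two is an equality by the ascending chain
condition. Since `R` is a Jacobson ring, every `P ∈ spec_w R` lies in some `M ∈ max_w R`.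
-/

section Torus

variable {k : Type*} [CommSemiring k] {n : ℕ}

theorem tact_X (g : Fin n → kˣ) (i : Fin n) : tact g (X i) = (g i : k) • X i :=
  aeval_X _ _

theorem tact_comp_tact (g h : Fin n → kˣ) : (tact g).comp (tact h) = tact (g * h) :=
  algHom_ext fun i => by simp [tact_X, smul_smul, mul_comm]

theorem tact_one : tact (1 : Fin n → kˣ) = AlgHom.id k _ :=
  algHom_ext fun i => by simp [tact_X]

theorem tact_surjective (g : Fin n → kˣ) : Function.Surjective (tact g) := fun f =>
  ⟨tact g⁻¹ f, by rw [← AlgHom.comp_apply, tact_comp_tact, mul_inv_cancel, tact_one]; rfl⟩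

theorem eval_tact (g : Fin n → kˣ) (b : Fin n → k) (f : MvPolynomial (Fin n) k) :
    eval b (tact g f) = eval (fun i => (g i : k) * b i) f := by
  induction f using MvPolynomial.induction_on with
  | C a => simp [tact]
  | add p q hp hq => simp [hp, hq]
  | mul_X p i hp =>
    simp only [map_mul, tact_X, Algebra.mul_smul_comm, smul_eval, hp, eval_X]
    ring

theorem mem_resT {G : Subgroup (Fin n → kˣ)} {I : Ideal (MvPolynomial (Fin n) k)}
    {f : MvPolynomial (Fin n) k} : f ∈ resT G I ↔ ∀ g ∈ G, tact g f ∈ I := by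
  simp [resT, Ideal.mem_comap]

theorem resT_mono (G : Subgroup (Fin n → kˣ)) {I J : Ideal (MvPolynomial (Fin n) k)}
    (h : I ≤ J) : resT G I ≤ resT G J := fun _ hf =>
  mem_resT.2 fun g hg => h (mem_resT.1 hf g hg)

end Torus

theorem Monotone.apply_eq_of_le_apply {α : Type*} [PartialOrder α] [WellFoundedGT α]
    {φ : α → α} (hmono : Monotone φ) (hinj : Function.Injective φ) {x : α} (h : x ≤ φ x) :
    φ x = x := by
  have hchain : Monotone fun m => φ^[m] x := monotone_nat_of_le_succ fun m => by
    simpa only [Function.iterate_succ_apply] using hmono.iterate m h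
  obtain ⟨N, hN⟩ := WellFoundedGT.monotone_chain_condition ⟨_, hchain⟩
  have hstable : φ^[N] x = φ^[N] (φ x) := hN (N + 1) N.le_succ
  exact (hinj.iterate N hstable).symm

theorem Ideal.comap_eq_of_le_comap {R F : Type*} [CommRing R] [IsNoetherianRing R]
    [FunLike F R R] [RingHomClass F R R] {σ : F} (hσ : Function.Surjective σ) {I : Ideal R}
    (h : I ≤ I.comap σ) : I.comap σ = I :=
  Monotone.apply_eq_of_le_apply (fun _ _ => Ideal.comap_mono)
    (Ideal.comap_injective_of_surjective σ hσ) h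

theorem exists_units_mul_eq_of_eq_zero_iff {ι G₀ : Type*} [GroupWithZero G₀] {a b : ι → G₀}
    (h : ∀ i, a i = 0 ↔ b i = 0) : ∃ t : ι → G₀ˣ, ∀ i, (t i : G₀) * a i = b i := by
  classical
  refine ⟨fun i => if ha : a i = 0 then 1 else Units.mk0 (b i / a i) ?_, fun i => ?_⟩
  · exact div_ne_zero (mt (h i).2 ha) ha
  · by_cases ha : a i = 0
    · simp [ha, (h i).1 ha]
    · simp [ha]

section Field

variable {k : Type*} [Field k] {n : ℕ}

theorem resT_vanishingIdeal_mul (G : Subgroup (Fin n → kˣ)) (t : Fin n → kˣ) (a : Fin n → k) :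
    resT G (vanishingIdeal k {fun i => (t i : k) * a i})
      = (resT G (vanishingIdeal k {a})).comap (tact t) := by
  ext f
  simp only [Ideal.mem_comap, mem_resT, mem_vanishingIdeal_singleton_iff, aeval_eq_eval,
    eval_tact, mul_left_comm]

theorem resT_vanishingIdeal_eq_of_le (G : Subgroup (Fin n → kˣ)) {a b : Fin n → k}
    (hab : ∀ i, a i = 0 ↔ b i = 0)
    (hle : resT G (vanishingIdeal k {a}) ≤ resT G (vanishingIdeal k {b})) :
    resT G (vanishingIdeal k {b}) = resT G (vanishingIdeal k {a}) := by
  obtain ⟨t, rfl⟩ : ∃ t : Fin n → kˣ, (fun i => (t i : k) * a i) = b := by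
    obtain ⟨t, ht⟩ := exists_units_mul_eq_of_eq_zero_iff hab
    exact ⟨t, funext ht⟩
  rw [resT_vanishingIdeal_mul] at hle ⊢
  exact Ideal.comap_eq_of_le_comap (tact_surjective t) hle

theorem exists_maxW_le {w : Set (Fin n)} {P : Ideal (MvPolynomial (Fin n) k)}
    (hP : P ∈ specW k w) : ∃ M ∈ maxW k w, P ≤ M := by
  classical
  obtain ⟨hPrime, hPX⟩ := hP
  set s : MvPolynomial (Fin n) k := ∏ i ∈ Finset.univ.filter (· ∉ w), X i
  have hs : s ∉ P := fun hsP => by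
    obtain ⟨i, hi, hXi⟩ := hPrime.prod_mem_iff.1 hsP
    exact (Finset.mem_filter.1 hi).2 ((hPX i).1 hXi)
  obtain ⟨M, ⟨hPM, hM⟩, hsM⟩ := Ideal.eq_jacobson_iff_notMem.1
    (IsJacobsonRing.out inferInstance hPrime.isRadical) s hs
  refine ⟨M, ⟨hM, fun i => ⟨fun hXi => ?_, fun hi => hPM ((hPX i).2 hi)⟩⟩, hPM⟩
  by_contra hi
  exact hsM (Ideal.prod_mem _ (by simp [hi]) hXi)

theorem exists_eq_vanishingIdeal_of_mem_maxW [IsAlgClosed k] {w : Set (Fin n)}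
    {M : Ideal (MvPolynomial (Fin n) k)} (hM : M ∈ maxW k w) :
    ∃ a : Fin n → k, M = vanishingIdeal k {a} ∧ ∀ i, a i = 0 ↔ i ∈ w := by
  obtain ⟨a, rfl⟩ := isMaximal_iff_eq_vanishingIdeal_singleton.1 hM.1
  refine ⟨a, rfl, fun i => ?_⟩
  simpa [mem_vanishingIdeal_singleton_iff] using hM.2 i

theorem maxW_subset_specW (w : Set (Fin n)) : maxW k w ⊆ specW k w :=
  fun _ hM => ⟨hM.1.isPrime, hM.2⟩

theorem resT_eq_of_le_of_mem_maxW [IsAlgClosed k] (G : Subgroup (Fin n → kˣ)) {w : Set (Fin n)}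
    {M M' : Ideal (MvPolynomial (Fin n) k)} (hM : M ∈ maxW k w) (hM' : M' ∈ maxW k w)
    (hle : resT G M ≤ resT G M') : resT G M' = resT G M := by
  obtain ⟨a, rfl, ha⟩ := exists_eq_vanishingIdeal_of_mem_maxW hM
  obtain ⟨b, rfl, hb⟩ := exists_eq_vanishingIdeal_of_mem_maxW hM'
  exact resT_vanishingIdeal_eq_of_le G (fun i => (ha i).trans (hb i).symm) hle

end Field

theorem stmt_11_general {k : Type*} [Field k] [IsAlgClosed k] {n : ℕ}
    (G : Set (Fin n) → Subgroup (Fin n → kˣ)) :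
    ∀ w : Set (Fin n),
      GmaxW G w = {Q ∈ GspecW (k := k) G w | ∀ Q' ∈ GspecW (k := k) G w, Q ≤ Q' → Q' = Q} := by
  intro w
  ext Q
  constructor
  · rintro ⟨M, hM, rfl⟩
    refine ⟨⟨M, maxW_subset_specW w hM, rfl⟩, ?_⟩
    rintro _ ⟨P, hP, rfl⟩ hle
    obtain ⟨M', hM', hPM'⟩ := exists_maxW_le hP
    have hres := resT_mono (G w) hPM'
    exact le_antisymm (hres.trans (resT_eq_of_le_of_mem_maxW _ hM hM' (hle.trans hres)).le) hle
  · rintro ⟨⟨P, hP, rfl⟩, hmax⟩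
    obtain ⟨M, hM, hPM⟩ := exists_maxW_le hP
    exact ⟨M, hM, (hmax _ ⟨M, maxW_subset_specW w hM, rfl⟩ (resT_mono _ hPM)).symm⟩

/-- Proposition 2.6: for `k` algebraically closed, `𝒢-max_w R` is the set
of maximal members of `𝒢-spec_w R`. -/
theorem stmt_11 {k : Type*} [Field k] [IsAlgClosed k] {n : ℕ}
    (G : Set (Fin n) → Subgroup (Fin n → kˣ))
    (hcompat : ∀ v w : Set (Fin n), v ⊆ w → ∀ P ∈ specW k w,
      resT (G v) P ≤ resT (G w) P) :
    ∀ w : Set (Fin n),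
      GmaxW G w = {Q ∈ GspecW (k := k) G w | ∀ Q' ∈ GspecW (k := k) G w, Q ≤ Q' → Q' = Q} :=
  stmt_11_general G
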